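/- arXiv:1905.00364 — 2 statements merged into one kernel-verified Lean document; each statement's English description precedes it below -/
import Mathlib

section
/- When for a PMA all populations with positive minimum targets are pairwise disjoint, the choice function given by Algorithm 1 (uniform promotion for candidates helping any unmet minimum target) coincides with the choice function given by Algorithm 2 (promotion graded by the number of unmet minimum targets a candidate helps): both algorithms choose the same subset from every candidate set. -/
/-! Shared definitions: PMA choice functions (greedy max-quota, Algorithm 1, Algorithm 2),
laminarity, deferred acceptance, and stability notions. -/

namespace PMA

variable {α : Type*} [DecidableEq α]

/-- A population constraint: a set of candidates together with a bound
(a maximum quota or a minimum target, depending on context). -/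
abbrev Pop (α : Type*) := Finset α × ℕ

/-- A set `S` respects all maximum quotas. -/
def Feasible (maxQ : List (Pop α)) (S : Finset α) : Prop :=
  ∀ q ∈ maxQ, (S ∩ q.1).card ≤ q.2

instance (maxQ : List (Pop α)) (S : Finset α) : Decidable (Feasible maxQ S) :=
  List.decidableBAll _ _

/-- Greedy pass: traverse candidates in the given order, accepting each candidate
whose addition violates no maximum quota. -/
def pass2 (maxQ : List (Pop α)) : List α → Finset α → Finset α
  | [], S => S
  | c :: rest, S =>
      if Feasible maxQ (insert c S) then pass2 maxQ rest (insert c S)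
      else pass2 maxQ rest S

/-- Candidate `c` belongs to some population whose minimum target is not yet met by `S`. -/
def HelpsMin (minT : List (Pop α)) (S : Finset α) (c : α) : Prop :=
  ∃ p ∈ minT, c ∈ p.1 ∧ (S ∩ p.1).card < p.2

instance (minT : List (Pop α)) (S : Finset α) (c : α) : Decidable (HelpsMin minT S c) :=
  List.decidableBEx _ _

/-- First pass of Algorithm 1: traverse candidates in order, accepting (subject to
maximum quotas) those who help meet some unmet minimum target. -/
def pass1 (maxQ minT : List (Pop α)) : List α → Finset α → Finset α
  | [], S => S
  | c :: rest, S =>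
      if HelpsMin minT S c ∧ Feasible maxQ (insert c S) then
        pass1 maxQ minT rest (insert c S)
      else pass1 maxQ minT rest S

/-- Algorithm 1 choice function: two passes over the candidates of `C`,
in the priority order given by the list `order`. -/
def choice1 (maxQ minT : List (Pop α)) (order : List α) (C : Finset α) : Finset α :=
  pass2 maxQ (order.filter fun c => decide (c ∈ C))
    (pass1 maxQ minT (order.filter fun c => decide (c ∈ C)) ∅)

/-- The greedy max-quota choice function (no minimum targets), with the priority order
given by the linear order on candidates. -/
def greedy [LinearOrder α] (maxQ : List (Pop α)) (C : Finset α) : Finset α :=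
  pass2 maxQ (C.sort (· ≤ ·)) ∅

/-- The greedy max-quota choice function with an explicit priority list. -/
def greedyL (maxQ : List (Pop α)) (order : List α) (C : Finset α) : Finset α :=
  pass2 maxQ (order.filter fun c => decide (c ∈ C)) ∅

/-- The number of populations with a minimum target not yet met by `S` to which `c` belongs. -/
def nUnmet (minT : List (Pop α)) (S : Finset α) (c : α) : ℕ :=
  (minT.filter fun p => decide (c ∈ p.1 ∧ (S ∩ p.1).card < p.2)).length

/-- The candidates of `R` maximizing the number of unmet minimum targets they help. -/
def bestSet [LinearOrder α] (minT : List (Pop α)) (S R : Finset α) : Finset α :=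
  R.filter fun c => ∀ d ∈ R, nUnmet minT S d ≤ nUnmet minT S c

lemma bestSet_nonempty [LinearOrder α] (minT : List (Pop α)) (S : Finset α) {R : Finset α}
    (hR : R.Nonempty) : (bestSet minT S R).Nonempty := by
  obtain ⟨b, hb, hmax⟩ := R.exists_max_image (nUnmet minT S) hR
  exact ⟨b, Finset.mem_filter.mpr ⟨hb, hmax⟩⟩

/-- The next candidate processed by Algorithm 2: among `R`, maximize the number of unmet
minimum targets helped, breaking ties by the priority order. -/
def pick [LinearOrder α] (minT : List (Pop α)) (S : Finset α) {R : Finset α}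
    (hR : R.Nonempty) : α :=
  (bestSet minT S R).min' (bestSet_nonempty minT S hR)

lemma pick_mem [LinearOrder α] (minT : List (Pop α)) (S : Finset α) {R : Finset α}
    (hR : R.Nonempty) : pick minT S hR ∈ R :=
  Finset.filter_subset _ _ (Finset.min'_mem _ _)

/-- Main loop of Algorithm 2: `R` is the set of unprocessed candidates, `S` the chosen set. -/
def choice2Go [LinearOrder α] (maxQ minT : List (Pop α)) (R S : Finset α) : Finset α :=
  if hR : R.Nonempty then
    choice2Go maxQ minT (R.erase (pick minT S hR))
      (if Feasible maxQ (insert (pick minT S hR) S) then insert (pick minT S hR) S else S)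
  else S
  termination_by R.card
  decreasing_by exact Finset.card_erase_lt_of_mem (pick_mem minT S hR)

/-- Algorithm 2 choice function. -/
def choice2 [LinearOrder α] (maxQ minT : List (Pop α)) (C : Finset α) : Finset α :=
  choice2Go maxQ minT C ∅

/-- A family of populations is laminar: any two are disjoint or nested. -/
def Laminar (pops : List (Pop α)) : Prop :=
  ∀ p ∈ pops, ∀ q ∈ pops, Disjoint p.1 q.1 ∨ p.1 ⊆ q.1 ∨ q.1 ⊆ p.1

/-- The sets of the populations carrying a positive minimum target. -/
def minTargetSets (minT : List (Pop α)) : Set (Finset α) :=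
  {P | ∃ t, (P, t) ∈ minT ∧ 0 < t}

/-- A family of sets is a union of pairwise-disjoint chains: it can be partitioned into
subfamilies, each totally ordered by inclusion, with sets in different subfamilies disjoint. -/
def UnionOfDisjointChains (F : Set (Finset α)) : Prop :=
  ∃ Part : Set (Set (Finset α)), ⋃₀ Part = F ∧ (∀ c ∈ Part, IsChain (· ⊆ ·) c) ∧
    Part.Pairwise fun c c' => ∀ P ∈ c, ∀ Q ∈ c', Disjoint P Q

section DA

variable {β : Type*} [Fintype α] [DecidableEq β]

/-- The institution to which candidate `c` currently applies: the most-preferred institution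
on her list that has not yet rejected her (`none` if her list is exhausted). -/
def applyTo (prefs : α → List β) (rej : α → Finset β) (c : α) : Option β :=
  (prefs c).find? fun m => decide (m ∉ rej c)

/-- The set of candidates currently applying to institution `m`. -/
def applicants (prefs : α → List β) (rej : α → Finset β) (m : β) : Finset α :=
  Finset.univ.filter fun c => applyTo prefs rej c = some m

/-- One round of candidate-proposing deferred acceptance: each candidate applies to her
most-preferred not-yet-rejecting institution; each institution keeps its choice from its
applicants and rejects the rest. `rej c` is the set of institutions that have rejected `c`. -/
def daRound (Ch : β → Finset α → Finset α) (prefs : α → List β) (rej : α → Finset β) :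
    α → Finset β := fun c =>
  match applyTo prefs rej c with
  | none => rej c
  | some m => if c ∈ Ch m (applicants prefs rej m) then rej c else insert m (rej c)

variable [Fintype β]

/-- The rejection sets at the end of candidate-proposing deferred acceptance (running enough
rounds to guarantee that a fixed point, i.e. a round with no rejections, has been reached). -/
def daRej (Ch : β → Finset α → Finset α) (prefs : α → List β) : α → Finset β :=
  (daRound Ch prefs)^[Fintype.card α * Fintype.card β + 1] fun _ => ∅

/-- The matching produced by candidate-proposing deferred acceptance. -/
def daMatch (Ch : β → Finset α → Finset α) (prefs : α → List β) : α → Option β :=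
  applyTo prefs (daRej Ch prefs)

end DA

section Stability

variable {β : Type*} [DecidableEq β]

/-- Candidate `c` strictly prefers institution `m` to the assignment `o`
(being unmatched, `none`, is worse than any institution on her list). -/
def Prefers (prefs : α → List β) (c : α) (m : β) : Option β → Prop
  | none => m ∈ prefs c
  | some m' => m ∈ prefs c ∧ (prefs c).idxOf m < (prefs c).idxOf m'

/-- Candidate `c` weakly prefers assignment `o` to assignment `o'`. -/
def WeaklyPrefers (prefs : α → List β) (c : α) (o o' : Option β) : Prop :=
  o = o' ∨ ∃ m, o = some m ∧ Prefers prefs c m o'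

variable [Fintype α]

/-- The set of candidates assigned to institution `m` by the matching `M`. -/
def assignedTo (M : α → Option β) (m : β) : Finset α :=
  Finset.univ.filter fun c => M c = some m

/-- Individual rationality: candidates are matched only to listed institutions, and each
institution chooses all candidates assigned to it. -/
def IndivRational (Ch : β → Finset α → Finset α) (prefs : α → List β) (M : α → Option β) :
    Prop :=
  (∀ c m, M c = some m → m ∈ prefs c) ∧ ∀ m, Ch m (assignedTo M m) = assignedTo M m

/-- `(c, m)` is a blocking pair for the matching `M`. -/
def Blocks (Ch : β → Finset α → Finset α) (prefs : α → List β) (M : α → Option β)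
    (c : α) (m : β) : Prop :=
  Prefers prefs c m (M c) ∧ c ∈ Ch m (insert c (assignedTo M m))

/-- Stability: individual rationality plus no blocking pairs. -/
def StableMatching (Ch : β → Finset α → Finset α) (prefs : α → List β) (M : α → Option β) :
    Prop :=
  IndivRational Ch prefs M ∧ ∀ c m, ¬ Blocks Ch prefs M c m

/-- One step of the candidate-Pareto-improvement stage: a blocking pair `(m, c)` such that
`c` can be added to `m` without rejecting anyone is resolved by assigning `c` to `m`. -/
def ParetoStep [DecidableEq α] (Ch : β → Finset α → Finset α) (prefs : α → List β)
    (M M' : α → Option β) : Prop :=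
  ∃ m c, Prefers prefs c m (M c) ∧
    Ch m (insert c (assignedTo M m)) = insert c (assignedTo M m) ∧
    M' = Function.update M c (some m)

end Stability

end PMA

open PMA

/-! When the populations with positive minimum targets are disjoint, a candidate helps at most
one unmet target, so Algorithm 2 always processes the highest-priority remaining candidate that
helps some unmet target, or the highest-priority remaining candidate if none does. Processing
that candidate first does not change the outcome of Algorithm 1: the candidates ahead of it help
no target, so the first pass skips them, and when the second pass reaches it, it is either
already chosen or still blocked by a maximum quota. Induction on the remaining candidates
finishes the proof. -/

namespace PMA

variable {α : Type*} [DecidableEq α]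

def addIfFeasible (maxQ : List (Pop α)) (c : α) (S : Finset α) : Finset α :=
  if Feasible maxQ (insert c S) then insert c S else S

lemma Feasible.subset {maxQ : List (Pop α)} {S T : Finset α} (hT : Feasible maxQ T)
    (hST : S ⊆ T) : Feasible maxQ S := fun q hq =>
  (Finset.card_le_card (Finset.inter_subset_inter_right hST)).trans (hT q hq)

lemma HelpsMin.subset {minT : List (Pop α)} {S T : Finset α} {c : α}
    (hT : HelpsMin minT T c) (hST : S ⊆ T) : HelpsMin minT S c := by
  obtain ⟨p, hp, hcp, hlt⟩ := hT
  exact ⟨p, hp, hcp, (Finset.card_le_card (Finset.inter_subset_inter_right hST)).trans_lt hlt⟩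

section addIfFeasible

variable (maxQ : List (Pop α)) (c : α)

lemma subset_addIfFeasible (S : Finset α) : S ⊆ addIfFeasible maxQ c S := by
  unfold addIfFeasible
  split_ifs
  exacts [Finset.subset_insert c S, subset_rfl]

lemma addIfFeasible_addIfFeasible (S : Finset α) :
    addIfFeasible maxQ c (addIfFeasible maxQ c S) = addIfFeasible maxQ c S := by
  unfold addIfFeasible
  split_ifs <;> simp_all

/-- Once `c` has been offered to `S`, it is either in `S` or blocked by a quota, and both stay
true for supersets of `S`. -/
lemma addIfFeasible_eq_self_of_subset {S T : Finset α} (hS : addIfFeasible maxQ c S = S)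
    (hST : S ⊆ T) : addIfFeasible maxQ c T = T := by
  unfold addIfFeasible at hS ⊢
  by_cases hSc : Feasible maxQ (insert c S)
  · rw [if_pos hSc] at hS
    simp [hST (hS ▸ Finset.mem_insert_self c S)]
  · rw [if_neg fun hTc => hSc (hTc.subset (Finset.insert_subset_insert c hST))]

end addIfFeasible

section passes

variable (maxQ minT : List (Pop α))

lemma pass2_cons (c : α) (L : List α) (S : Finset α) :
    pass2 maxQ (c :: L) S = pass2 maxQ L (addIfFeasible maxQ c S) := by
  by_cases h : Feasible maxQ (insert c S) <;> simp [pass2, addIfFeasible, h]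

lemma pass2_append (L L' : List α) (S : Finset α) :
    pass2 maxQ (L ++ L') S = pass2 maxQ L' (pass2 maxQ L S) := by
  induction L generalizing S with
  | nil => rfl
  | cons c L ih => rw [List.cons_append, pass2_cons, pass2_cons, ih]

lemma subset_pass2 (L : List α) (S : Finset α) : S ⊆ pass2 maxQ L S := by
  induction L generalizing S with
  | nil => exact subset_rfl
  | cons c L ih =>
    rw [pass2_cons]
    exact (subset_addIfFeasible maxQ c S).trans (ih _)

lemma pass2_append_cons_of_addIfFeasible_eq_self {c : α} {S : Finset α}
    (hc : addIfFeasible maxQ c S = S) (L L' : List α) :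
    pass2 maxQ (L ++ c :: L') S = pass2 maxQ (L ++ L') S := by
  rw [pass2_append, pass2_append, pass2_cons,
    addIfFeasible_eq_self_of_subset maxQ c hc (subset_pass2 maxQ L S)]

lemma pass1_cons_of_helpsMin {c : α} {S : Finset α} (hc : HelpsMin minT S c) (L : List α) :
    pass1 maxQ minT (c :: L) S = pass1 maxQ minT L (addIfFeasible maxQ c S) := by
  by_cases h : Feasible maxQ (insert c S) <;> simp [pass1, addIfFeasible, hc, h]

lemma pass1_append (L L' : List α) (S : Finset α) :
    pass1 maxQ minT (L ++ L') S = pass1 maxQ minT L' (pass1 maxQ minT L S) := by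
  induction L generalizing S with
  | nil => rfl
  | cons c L ih =>
    simp only [List.cons_append, pass1]
    split_ifs <;> exact ih _

lemma subset_pass1 (L : List α) (S : Finset α) : S ⊆ pass1 maxQ minT L S := by
  induction L generalizing S with
  | nil => exact subset_rfl
  | cons c L ih =>
    unfold pass1
    split_ifs
    exacts [(Finset.subset_insert c S).trans (ih _), ih _]

lemma pass1_eq_self {S₀ : Finset α} {L : List α} (hL : ∀ c ∈ L, ¬ HelpsMin minT S₀ c)
    {S : Finset α} (hS : S₀ ⊆ S) : pass1 maxQ minT L S = S := by
  induction L with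
  | nil => rfl
  | cons c L ih =>
    rw [List.forall_mem_cons] at hL
    unfold pass1
    rw [if_neg fun h => hL.1 (h.1.subset hS)]
    exact ih hL.2

lemma pass2_pass1_append_cons_of_helpsMin {S : Finset α} {A B : List α} {c : α}
    (hA : ∀ a ∈ A, ¬ HelpsMin minT S a) (hc : HelpsMin minT S c) :
    pass2 maxQ (A ++ c :: B) (pass1 maxQ minT (A ++ c :: B) S) =
      pass2 maxQ (A ++ B) (pass1 maxQ minT (A ++ B) (addIfFeasible maxQ c S)) := by
  have hS := subset_addIfFeasible maxQ c S
  rw [pass1_append, pass1_append, pass1_eq_self maxQ minT hA subset_rfl,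
    pass1_eq_self maxQ minT hA hS, pass1_cons_of_helpsMin maxQ minT hc,
    pass2_append_cons_of_addIfFeasible_eq_self]
  exact addIfFeasible_eq_self_of_subset maxQ c (addIfFeasible_addIfFeasible maxQ c S)
    (subset_pass1 maxQ minT B _)

lemma pass2_pass1_cons_of_forall_not_helpsMin {S : Finset α} {c : α} {B : List α}
    (h : ∀ x ∈ c :: B, ¬ HelpsMin minT S x) :
    pass2 maxQ (c :: B) (pass1 maxQ minT (c :: B) S) =
      pass2 maxQ B (pass1 maxQ minT B (addIfFeasible maxQ c S)) := by
  rw [pass1_eq_self maxQ minT h subset_rfl, pass2_cons,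
    pass1_eq_self maxQ minT (fun x hx => h x (List.mem_cons_of_mem c hx))
      (subset_addIfFeasible maxQ c S)]

end passes

section pick

variable {minT : List (Pop α)} {S : Finset α}

lemma helpsMin_iff_pos_nUnmet {c : α} : HelpsMin minT S c ↔ 0 < nUnmet minT S c := by
  simp [HelpsMin, nUnmet, List.length_pos_iff_exists_mem, List.mem_filter]

lemma nUnmet_le_one (hdisj : minT.Pairwise fun p q => 0 < p.2 → 0 < q.2 → Disjoint p.1 q.1)
    (c : α) : nUnmet minT S c ≤ 1 := by
  have hpw := hdisj.sublist
    (List.filter_sublist (p := fun p => decide (c ∈ p.1 ∧ (S ∩ p.1).card < p.2)))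
  have hmem : ∀ p ∈ minT.filter fun p => decide (c ∈ p.1 ∧ (S ∩ p.1).card < p.2),
      c ∈ p.1 ∧ 0 < p.2 := fun p hp => by
    have := (List.mem_filter.mp hp).2
    simp only [decide_eq_true_eq] at this
    exact ⟨this.1, this.2.pos⟩
  unfold nUnmet
  generalize minT.filter _ = F at hpw hmem
  rcases F with _ | ⟨p, _ | ⟨q, F⟩⟩
  · simp
  · simp
  · obtain ⟨hp, hp0⟩ := hmem p (by simp)
    obtain ⟨hq, hq0⟩ := hmem q (by simp)
    have hpq := (List.pairwise_cons.mp hpw).1 q (by simp) hp0 hq0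
    exact (Finset.disjoint_left.mp hpq hp hq).elim

variable [LinearOrder α] {R : Finset α}

lemma mem_bestSet_of_helpsMin
    (hdisj : minT.Pairwise fun p q => 0 < p.2 → 0 < q.2 → Disjoint p.1 q.1)
    {c : α} (hc : c ∈ R) (hhc : HelpsMin minT S c) : c ∈ bestSet minT S R :=
  Finset.mem_filter.mpr ⟨hc, fun d _ =>
    (nUnmet_le_one hdisj d).trans (helpsMin_iff_pos_nUnmet.mp hhc)⟩

lemma mem_bestSet_of_forall_not_helpsMin (h : ∀ x ∈ R, ¬ HelpsMin minT S x) {c : α}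
    (hc : c ∈ R) : c ∈ bestSet minT S R :=
  Finset.mem_filter.mpr ⟨hc, fun d hd => by
    simp [Nat.eq_zero_of_not_pos (helpsMin_iff_pos_nUnmet.not.mp (h d hd))]⟩

lemma helpsMin_pick (hR : R.Nonempty) {c : α} (hc : c ∈ R) (hhc : HelpsMin minT S c) :
    HelpsMin minT S (pick minT S hR) := by
  have hbest := (Finset.mem_filter.mp (Finset.min'_mem _ (bestSet_nonempty minT S hR))).2
  exact helpsMin_iff_pos_nUnmet.mpr
    ((helpsMin_iff_pos_nUnmet.mp hhc).trans_le (hbest c hc))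

lemma not_helpsMin_of_lt_pick
    (hdisj : minT.Pairwise fun p q => 0 < p.2 → 0 < q.2 → Disjoint p.1 q.1)
    (hR : R.Nonempty) {a : α} (ha : a ∈ R) (hlt : a < pick minT S hR) : ¬ HelpsMin minT S a :=
  fun hha => hlt.not_ge (Finset.min'_le _ _ (mem_bestSet_of_helpsMin hdisj ha hha))

lemma pick_le_of_forall_not_helpsMin (hR : R.Nonempty) (h : ∀ x ∈ R, ¬ HelpsMin minT S x)
    {c : α} (hc : c ∈ R) : pick minT S hR ≤ c :=
  Finset.min'_le _ _ (mem_bestSet_of_forall_not_helpsMin h hc)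

end pick

theorem choice2Go_eq_pass2_pass1 [LinearOrder α] {maxQ minT : List (Pop α)}
    (hdisj : minT.Pairwise fun p q => 0 < p.2 → 0 < q.2 → Disjoint p.1 q.1)
    {L : List α} (hL : L.Pairwise (· < ·)) (S : Finset α) :
    choice2Go maxQ minT L.toFinset S = pass2 maxQ L (pass1 maxQ minT L S) := by
  induction h : L.length using Nat.strong_induction_on generalizing L S with | _ n ih =>
  by_cases hR : L.toFinset.Nonempty
  swap
  · obtain rfl : L = [] := by simpa using hR
    rw [choice2Go, dif_neg hR]
    rfl
  rw [choice2Go, dif_pos hR]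
  generalize hc : pick minT S hR = c
  obtain ⟨A, B, rfl⟩ := List.append_of_mem (hc ▸ List.mem_toFinset.mp (pick_mem minT S hR))
  obtain ⟨-, hcB_sorted, hAcB⟩ := List.pairwise_append.mp hL
  have hA : ∀ a ∈ A, a < c := fun a ha => hAcB a ha c List.mem_cons_self
  have hcA : c ∉ A := fun h => lt_irrefl c (hA c h)
  have hcB : c ∉ B := fun h => lt_irrefl c ((List.pairwise_cons.mp hcB_sorted).1 c h)
  have herase : (A ++ c :: B).toFinset.erase c = (A ++ B).toFinset := by
    rw [List.toFinset_append, List.toFinset_cons, Finset.erase_union_distrib,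
      Finset.erase_insert (by simpa), Finset.erase_eq_of_notMem (by simpa), List.toFinset_append]
  have hsorted : (A ++ B).Pairwise (· < ·) :=
    hL.sublist ((List.sublist_cons_self c B).append_left A)
  rw [herase, ih _ (by simp [← h]) hsorted _ rfl]
  by_cases hhc : HelpsMin minT S c
  · have hA' : ∀ a ∈ A, ¬ HelpsMin minT S a := fun a ha =>
      not_helpsMin_of_lt_pick hdisj hR (by simp [ha]) (hc.symm ▸ hA a ha)
    exact (pass2_pass1_append_cons_of_helpsMin maxQ minT hA' hhc).symm
  · have hnone : ∀ x ∈ A ++ c :: B, ¬ HelpsMin minT S x := fun x hx hhx =>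
      hhc (hc ▸ helpsMin_pick hR (List.mem_toFinset.mpr hx) hhx)
    obtain rfl : A = [] := List.eq_nil_iff_forall_not_mem.mpr fun a ha =>
      (hA a ha).not_ge (hc ▸ pick_le_of_forall_not_helpsMin hR
        (fun x hx => hnone x (List.mem_toFinset.mp hx)) (by simp [ha]))
    exact (pass2_pass1_cons_of_forall_not_helpsMin maxQ minT hnone).symm

end PMA

/-- When all populations with positive minimum targets are pairwise
disjoint, Algorithm 1 (uniform promotion) and Algorithm 2 (graded promotion) choose the
same subset from every candidate set. -/
theorem choice1_eq_choice2 {α : Type*} [DecidableEq α] [LinearOrder α]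
    (maxQ minT : List (Pop α))
    (hdisj : minT.Pairwise fun p q => 0 < p.2 → 0 < q.2 → Disjoint p.1 q.1)
    (C : Finset α) :
    choice1 maxQ minT (C.sort (· ≤ ·)) C = choice2 maxQ minT C := by
  have hfilter : (C.sort (· ≤ ·)).filter (fun c => decide (c ∈ C)) = C.sort (· ≤ ·) :=
    List.filter_eq_self.mpr fun c hc => by simpa using hc
  rw [choice1, hfilter, choice2,
    ← choice2Go_eq_pass2_pass1 hdisj (Finset.sortedLT_sort C).pairwise, Finset.sort_toFinset]
end

section
/- If the populations of a PMA are laminar and the populations with positive minimum targets form a union of pairwise-disjoint chains, then the choice function induced by Algorithm 2 is substitutable: for every candidate set C and every c in C, Ch(C) \ {c} ⊆ Ch(C \ {c}). -/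
open PMA

/-!
Algorithm 2 maximises, over the feasible subsets of `C`, the potential
`2 ^ #C * targetScore + ∑ priorityWeight`: the target score, a sum of concave terms
`min #(S ∩ P) t`, is compared first, and distinct powers of two encoding the priority order break
ties. Laminarity gives an exchange property: for feasible `S`, `T` and `x ∈ S \ T`, moving `x` to
`T`, possibly against some `y ∈ T \ S`, keeps both sets feasible and does not decrease the sum of
their potentials. Hence the candidate picked at each greedy step, if she can be accepted, lies in
every optimum, so Algorithm 2 returns the optimum and the optimum is unique. If `x ≠ c` were in the
optimum over `C` but not in that over `C \ {c}`, the exchange would produce a second optimum over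
`C` without `x`.
-/

open Finset

namespace PMA

section Laminar

variable {α : Type*}

def IsLaminar (L : Finset (Finset α)) : Prop :=
  ∀ P ∈ L, ∀ Q ∈ L, Disjoint P Q ∨ P ⊆ Q ∨ Q ⊆ P

lemma Laminar.isLaminar [DecidableEq α] {pops : List (Pop α)} (h : Laminar pops) :
    IsLaminar (pops.map Prod.fst).toFinset := by
  simp only [IsLaminar, List.mem_toFinset, List.mem_map]
  rintro _ ⟨p, hp, rfl⟩ _ ⟨q, hq, rfl⟩
  exact h p hp q hq

namespace IsLaminar

variable {L : Finset (Finset α)} {P Q : Finset α}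

lemma mono {L' : Finset (Finset α)} (hL : IsLaminar L) (h : L' ⊆ L) : IsLaminar L' :=
  fun P hP Q hQ => hL P (h hP) Q (h hQ)

lemma subset_of_card_le (hL : IsLaminar L) (hP : P ∈ L) (hQ : Q ∈ L) (hPQ : ¬Disjoint P Q)
    (hcard : #P ≤ #Q) : P ⊆ Q := by
  rcases hL P hP Q hQ with h | h | h
  · exact absurd h hPQ
  · exact h
  · exact (eq_of_subset_of_card_le h hcard).ge

lemma subset_of_mem_of_notMem (hL : IsLaminar L) (hP : P ∈ L) (hQ : Q ∈ L) {x y : α}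
    (hyP : y ∈ P) (hyQ : y ∈ Q) (hxQ : x ∈ Q) (hxP : x ∉ P) : P ⊆ Q := by
  rcases hL P hP Q hQ with h | h | h
  · exact absurd hyQ (disjoint_left.1 h hyP)
  · exact h
  · exact absurd (h hxQ) hxP

variable [DecidableEq α]

/-- Split off a largest member `Q`: every other member lies inside `Q` or is disjoint from it. -/
lemma card_inter_sup_le {S T : Finset α} (hL : IsLaminar L)
    (hle : ∀ P ∈ L, #(T ∩ P) ≤ #(S ∩ P)) : #(T ∩ L.sup id) ≤ #(S ∩ L.sup id) := by
  induction L using Finset.strongInduction with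
  | H L ih =>
  rcases L.eq_empty_or_nonempty with rfl | hne
  · simp
  obtain ⟨Q, hQ, hQmax⟩ := L.exists_max_image card hne
  set L' := (L.erase Q).filter fun P => Disjoint P Q
  have hL'L : L' ⊂ L := (filter_subset _ _).trans_ssubset (erase_ssubset hQ)
  have hsup : L.sup id = Q ∪ L'.sup id := by
    refine subset_antisymm (fun z hz => ?_)
      (union_subset (le_sup (f := id) hQ) (sup_mono hL'L.subset))
    obtain ⟨P, hP, hzP⟩ := mem_sup.1 hz
    by_cases hPQ : P = Q
    · exact mem_union_left _ (hPQ ▸ hzP)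
    by_cases hdisj : Disjoint P Q
    · exact mem_union_right _ (mem_sup.2 ⟨P, mem_filter.2 ⟨mem_erase.2 ⟨hPQ, hP⟩, hdisj⟩, hzP⟩)
    · exact mem_union_left _ (hL.subset_of_card_le hP hQ hdisj (hQmax P hP) hzP)
  have hdisj : Disjoint Q (L'.sup id) :=
    Finset.disjoint_sup_right.2 fun P hP => (mem_filter.1 hP).2.symm
  have hsplit (X : Finset α) : #(X ∩ L.sup id) = #(X ∩ Q) + #(X ∩ L'.sup id) := by
    rw [hsup, inter_union_distrib_left,
      card_union_of_disjoint (hdisj.mono inter_subset_right inter_subset_right)]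
  have hrest := ih L' hL'L (hL.mono hL'L.subset) fun P hP => hle P (hL'L.subset hP)
  have hQle := hle Q hQ
  rw [hsplit, hsplit]
  omega

end IsLaminar

end Laminar

section Exchange

variable {α : Type*} [DecidableEq α]

/-- Every quota and every concave term `min · t` survives an exchange of `(S, T)` for `(S', T')`
that is balanced on all populations. -/
def BalancedOn (S T S' T' P : Finset α) : Prop :=
  #(S' ∩ P) + #(T' ∩ P) = #(S ∩ P) + #(T ∩ P) ∧
    min #(S ∩ P) #(T ∩ P) ≤ #(S' ∩ P) ∧ #(S' ∩ P) ≤ max #(S ∩ P) #(T ∩ P)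

namespace BalancedOn

variable {S T S' T' P : Finset α}

lemma le_of_le (h : BalancedOn S T S' T' P) {q : ℕ} (hS : #(S ∩ P) ≤ q) (hT : #(T ∩ P) ≤ q) :
    #(S' ∩ P) ≤ q ∧ #(T' ∩ P) ≤ q := by
  obtain ⟨_, _, _⟩ := h
  omega

lemma min_add_min_le (h : BalancedOn S T S' T' P) (t : ℕ) :
    min #(S ∩ P) t + min #(T ∩ P) t ≤ min #(S' ∩ P) t + min #(T' ∩ P) t := by
  obtain ⟨_, _, _⟩ := h
  omega

end BalancedOn

variable {S T P : Finset α} {x y : α}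

lemma card_insert_inter_of_mem (hxS : x ∉ S) (hxP : x ∈ P) :
    #(insert x S ∩ P) = #(S ∩ P) + 1 := by
  rw [insert_inter_of_mem hxP, card_insert_of_notMem fun h => hxS (mem_inter.1 h).1]

lemma card_erase_inter_of_mem (hxS : x ∈ S) (hxP : x ∈ P) :
    #(S.erase x ∩ P) + 1 = #(S ∩ P) := by
  rw [erase_inter, card_erase_add_one (mem_inter.2 ⟨hxS, hxP⟩)]

lemma erase_inter_of_notMem (hxP : x ∉ P) : S.erase x ∩ P = S ∩ P := by
  rw [erase_inter, erase_eq_of_notMem fun h => hxP (mem_inter.1 h).2]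

lemma balancedOn_move (hxS : x ∈ S) (hxT : x ∉ T) (h : x ∈ P → #(T ∩ P) < #(S ∩ P)) :
    BalancedOn S T (S.erase x) (insert x T) P := by
  by_cases hxP : x ∈ P
  · have := card_erase_inter_of_mem hxS hxP
    have := card_insert_inter_of_mem hxT hxP
    have := h hxP
    unfold BalancedOn
    omega
  · rw [BalancedOn, erase_inter_of_notMem hxP, insert_inter_of_notMem hxP]
    omega

lemma balancedOn_swap (hxS : x ∈ S) (hxT : x ∉ T) (hyT : y ∈ T) (hyS : y ∉ S)
    (hx : x ∈ P → y ∉ P → #(T ∩ P) < #(S ∩ P)) (hy : y ∈ P → x ∉ P → #(S ∩ P) < #(T ∩ P)) :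
    BalancedOn S T (insert y (S.erase x)) ((insert x T).erase y) P := by
  have hyS' : y ∉ S.erase x := fun h => hyS (mem_of_mem_erase h)
  have hyT' : y ∈ insert x T := mem_insert_of_mem hyT
  unfold BalancedOn
  by_cases hxP : x ∈ P <;> by_cases hyP : y ∈ P
  · have := card_erase_inter_of_mem hxS hxP
    have := card_insert_inter_of_mem hyS' hyP
    have := card_insert_inter_of_mem hxT hxP
    have := card_erase_inter_of_mem hyT' hyP
    omega
  · have := card_erase_inter_of_mem hxS hxP
    have := card_insert_inter_of_mem hxT hxP
    have := hx hxP hyP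
    rw [insert_inter_of_notMem hyP, erase_inter_of_notMem hyP]
    omega
  · have hS' := card_insert_inter_of_mem hyS' hyP
    have hT' := card_erase_inter_of_mem hyT' hyP
    have := hy hyP hxP
    rw [erase_inter_of_notMem hxP] at hS'
    rw [insert_inter_of_notMem hxP] at hT'
    omega
  · rw [insert_inter_of_notMem hyP, erase_inter_of_notMem hyP, erase_inter_of_notMem hxP,
      insert_inter_of_notMem hxP]
    omega

/-- On `p \ U`, where `U` is the union of the members inside `p` that avoid `x` and on which `T`
does not exceed `S`, the set `T` still has at least as many elements as `S`, and `x ∈ S \ T`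
lies there; so some `y ∈ T \ S` lies there too. -/
lemma IsLaminar.exists_swap_partner {L : Finset (Finset α)} {p : Finset α} (hL : IsLaminar L)
    (hp : p ∈ L) (hxS : x ∈ S) (hxT : x ∉ T) (hxp : x ∈ p) (hle : #(S ∩ p) ≤ #(T ∩ p)) :
    ∃ y ∈ T, y ∉ S ∧ y ∈ p ∧ ∀ P ∈ L, y ∈ P → x ∉ P → #(S ∩ P) < #(T ∩ P) := by
  set D := L.filter fun P => P ⊆ p ∧ x ∉ P ∧ #(T ∩ P) ≤ #(S ∩ P)
  set U := D.sup id
  have hDU : #(T ∩ U) ≤ #(S ∩ U) :=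
    (hL.mono (filter_subset _ _)).card_inter_sup_le fun P hP => (mem_filter.1 hP).2.2.2
  have hUp : U ⊆ p := Finset.sup_le fun P hP => (mem_filter.1 hP).2.1
  have hxU : x ∉ U := fun h => by
    obtain ⟨P, hP, hxP⟩ := mem_sup.1 h
    exact (mem_filter.1 hP).2.2.1 hxP
  have hsplit (X : Finset α) : #(X ∩ p) = #(X ∩ U) + #(X ∩ (p \ U)) := by
    rw [← card_union_of_disjoint (disjoint_sdiff.mono inter_subset_right inter_subset_right),
      ← inter_union_distrib_left, union_sdiff_of_subset hUp]
  have hxA : x ∈ S ∩ (p \ U) := mem_inter.2 ⟨hxS, mem_sdiff.2 ⟨hxp, hxU⟩⟩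
  obtain ⟨y, hyA, hyS⟩ : ∃ y ∈ T ∩ (p \ U), y ∉ S := by
    by_contra! h
    have hsub : T ∩ (p \ U) ⊆ (S ∩ (p \ U)).erase x := fun z hz =>
      mem_erase.2 ⟨fun hzx => hxT (hzx ▸ (mem_inter.1 hz).1),
        mem_inter.2 ⟨h z hz, (mem_inter.1 hz).2⟩⟩
    have hlt := (card_le_card hsub).trans_lt (card_erase_lt_of_mem hxA)
    have := hsplit S
    have := hsplit T
    omega
  obtain ⟨hyT, hyp, hyU⟩ : y ∈ T ∧ y ∈ p ∧ y ∉ U := by simp_all [mem_sdiff]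
  refine ⟨y, hyT, hyS, hyp, fun P hP hyP hxP => ?_⟩
  by_contra! h
  have hPD : P ∈ D :=
    mem_filter.2 ⟨hP, hL.subset_of_mem_of_notMem hP hp hyP hyp hxp hxP, hxP, h⟩
  exact hyU (mem_sup.2 ⟨P, hPD, hyP⟩)

lemma IsLaminar.exists_balancedOn_exchange {L : Finset (Finset α)} (hL : IsLaminar L)
    (hxS : x ∈ S) (hxT : x ∉ T) :
    (∀ P ∈ L, BalancedOn S T (S.erase x) (insert x T) P) ∨
      ∃ y ∈ T, y ∉ S ∧
        ∀ P ∈ L, BalancedOn S T (insert y (S.erase x)) ((insert x T).erase y) P := by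
  set Bad := L.filter fun P => x ∈ P ∧ #(S ∩ P) ≤ #(T ∩ P)
  rcases Bad.eq_empty_or_nonempty with hB | hB
  · refine Or.inl fun P hP => balancedOn_move hxS hxT fun hxP => ?_
    by_contra! h
    exact (eq_empty_iff_forall_notMem.1 hB) P (mem_filter.2 ⟨hP, hxP, h⟩)
  -- a smallest blocking member `p` lies inside every other one, so a partner `y ∈ p` is
  -- never separated from `x` by a blocking member
  obtain ⟨p, hpB, hpmin⟩ := Bad.exists_min_image card hB
  obtain ⟨hp, hxp, hple⟩ := mem_filter.1 hpB
  obtain ⟨y, hyT, hyS, hyp, hy⟩ := hL.exists_swap_partner hp hxS hxT hxp hple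
  refine Or.inr ⟨y, hyT, hyS, fun P hP =>
    balancedOn_swap hxS hxT hyT hyS (fun hxP hyP => ?_) (hy P hP)⟩
  by_contra! h
  have hpP := hL.subset_of_card_le hp hP (not_disjoint_iff.2 ⟨x, hxp, hxP⟩)
    (hpmin P (mem_filter.2 ⟨hP, hxP, h⟩))
  exact hyP (hpP hyp)

end Exchange

section Score

variable {α : Type*} [DecidableEq α] {maxQ minT : List (Pop α)} {S T S' T' : Finset α} {x : α}

lemma Feasible.mono (hT : Feasible maxQ T) (h : S ⊆ T) : Feasible maxQ S := fun q hq =>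
  (card_le_card (inter_subset_inter_right h)).trans (hT q hq)

lemma Feasible.of_balancedOn (hS : Feasible maxQ S) (hT : Feasible maxQ T)
    (h : ∀ q ∈ maxQ, BalancedOn S T S' T' q.1) : Feasible maxQ S' ∧ Feasible maxQ T' :=
  ⟨fun q hq => ((h q hq).le_of_le (hS q hq) (hT q hq)).1,
    fun q hq => ((h q hq).le_of_le (hS q hq) (hT q hq)).2⟩

def targetScore (minT : List (Pop α)) (S : Finset α) : ℕ :=
  (minT.map fun p => min #(S ∩ p.1) p.2).sum

lemma targetScore_insert (minT : List (Pop α)) (hx : x ∉ S) :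
    targetScore minT (insert x S) = targetScore minT S + nUnmet minT S x := by
  induction minT with
  | nil => rfl
  | cons p l ih =>
    simp only [targetScore, nUnmet, List.map_cons, List.sum_cons, List.filter_cons] at ih ⊢
    by_cases hxp : x ∈ p.1
    · rw [card_insert_inter_of_mem hx hxp]
      by_cases hlt : #(S ∩ p.1) < p.2 <;> simp [hxp, hlt, ih] <;> omega
    · simp [insert_inter_of_notMem hxp, hxp, ih]
      omega

lemma targetScore_add_le_of_balancedOn (h : ∀ p ∈ minT, BalancedOn S T S' T' p.1) :
    targetScore minT S + targetScore minT T ≤ targetScore minT S' + targetScore minT T' := by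
  simp only [targetScore, ← List.sum_map_add]
  exact List.sum_le_sum fun p hp => (h p hp).min_add_min_le p.2

end Score

section Potential

variable {α : Type*} [LinearOrder α] {C : Finset α} {a b : α}

def priorityWeight (C : Finset α) (a : α) : ℕ :=
  2 ^ #{z ∈ C | a < z}

lemma priorityWeight_lt (ha : a ∈ C) : priorityWeight C a < 2 ^ #C :=
  Nat.pow_lt_pow_right one_lt_two (card_lt_card (filter_ssubset.2 ⟨a, ha, lt_irrefl a⟩))

lemma priorityWeight_lt_of_lt (hb : b ∈ C) (hab : a < b) :
    priorityWeight C b < priorityWeight C a := by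
  refine Nat.pow_lt_pow_right one_lt_two (card_lt_card ?_)
  refine ssubset_iff_of_subset (fun z hz => ?_) |>.2 ⟨b, by simp [hb, hab], by simp⟩
  simp only [mem_filter] at hz ⊢
  exact ⟨hz.1, hab.trans hz.2⟩

variable [DecidableEq α] {maxQ minT : List (Pop α)} {S T : Finset α} {x : α}

def potential (minT : List (Pop α)) (C S : Finset α) : ℕ :=
  2 ^ #C * targetScore minT S + ∑ a ∈ S, priorityWeight C a

lemma potential_insert (minT : List (Pop α)) (C : Finset α) (hx : x ∉ S) :
    potential minT C (insert x S) =
      potential minT C S + (2 ^ #C * nUnmet minT S x + priorityWeight C x) := by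
  rw [potential, potential, targetScore_insert minT hx, sum_insert hx]
  ring

lemma potential_lt_insert (minT : List (Pop α)) (C : Finset α) (hx : x ∉ S) :
    potential minT C S < potential minT C (insert x S) := by
  rw [potential_insert minT C hx]
  have : 0 < priorityWeight C x := Nat.two_pow_pos _
  omega

lemma potential_insert_lt_insert_pick {R : Finset α} (hR : R.Nonempty) (hRC : R ⊆ C) {y : α}
    (hy : y ∈ R) (hne : y ≠ pick minT S hR) (hyS : y ∉ S) (hxS : pick minT S hR ∉ S) :
    potential minT C (insert y S) < potential minT C (insert (pick minT S hR) S) := by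
  obtain ⟨-, hbest⟩ := mem_filter.1 (min'_mem (bestSet minT S R) (bestSet_nonempty minT S hR))
  change ∀ d ∈ R, nUnmet minT S d ≤ nUnmet minT S (pick minT S hR) at hbest
  rw [potential_insert minT C hyS, potential_insert minT C hxS]
  have hwy := priorityWeight_lt (hRC hy)
  rcases (hbest y hy).lt_or_eq with hlt | heq
  · have := Nat.mul_le_mul_left (2 ^ #C) (Nat.succ_le_of_lt hlt)
    rw [Nat.mul_succ] at this
    omega
  · have hyb : y ∈ bestSet minT S R := mem_filter.2 ⟨hy, fun d hd => heq ▸ hbest d hd⟩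
    have hpy : pick minT S hR < y := (min'_le _ _ hyb).lt_of_ne (Ne.symm hne)
    have := priorityWeight_lt_of_lt (hRC hy) hpy
    rw [heq]
    omega

lemma exists_potential_exchange (hlam : Laminar (maxQ ++ minT)) (C : Finset α)
    (hS : Feasible maxQ S) (hT : Feasible maxQ T) (hxS : x ∈ S) (hxT : x ∉ T) :
    ∃ S' T', Feasible maxQ S' ∧ Feasible maxQ T' ∧ T' ⊆ insert x T ∧
      potential minT C S + potential minT C T ≤ potential minT C S' + potential minT C T' ∧
      (S' = S.erase x ∨ ∃ y ∈ T, y ∉ S ∧ S' = insert y (S.erase x)) := by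
  have hmem {q : Pop α} (hq : q ∈ maxQ ++ minT) :
      q.1 ∈ ((maxQ ++ minT).map Prod.fst).toFinset :=
    List.mem_toFinset.2 (List.mem_map_of_mem hq)
  have key {S' T' : Finset α} (hbal : ∀ q ∈ maxQ ++ minT, BalancedOn S T S' T' q.1)
      (hw : ∑ a ∈ S', priorityWeight C a + ∑ a ∈ T', priorityWeight C a =
        ∑ a ∈ S, priorityWeight C a + ∑ a ∈ T, priorityWeight C a) :
      Feasible maxQ S' ∧ Feasible maxQ T' ∧
        potential minT C S + potential minT C T ≤ potential minT C S' + potential minT C T' := by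
    obtain ⟨hS', hT'⟩ := hS.of_balancedOn hT fun q hq => hbal q (List.mem_append_left _ hq)
    have hscore := Nat.mul_le_mul_left (2 ^ #C) (targetScore_add_le_of_balancedOn (minT := minT)
      fun p hp => hbal p (List.mem_append_right _ hp))
    rw [Nat.mul_add, Nat.mul_add] at hscore
    refine ⟨hS', hT', ?_⟩
    unfold potential
    omega
  have hSw := sum_erase_add S (priorityWeight C) hxS
  rcases hlam.isLaminar.exists_balancedOn_exchange hxS hxT with hbal | ⟨y, hyT, hyS, hbal⟩
  · obtain ⟨hS', hT', hV⟩ := key (fun q hq => hbal q.1 (hmem hq)) (by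
      rw [sum_insert hxT]
      omega)
    exact ⟨_, _, hS', hT', subset_rfl, hV, Or.inl rfl⟩
  · have hTw := sum_erase_add (insert x T) (priorityWeight C) (mem_insert_of_mem hyT)
    rw [sum_insert hxT] at hTw
    obtain ⟨hS', hT', hV⟩ := key (fun q hq => hbal q.1 (hmem hq)) (by
      rw [sum_insert fun h => hyS (mem_of_mem_erase h)]
      omega)
    exact ⟨_, _, hS', hT', erase_subset _ _, hV, Or.inr ⟨y, hyT, hyS, rfl⟩⟩

structure IsOptimal (maxQ minT : List (Pop α)) (C C' O : Finset α) : Prop where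
  subset : O ⊆ C'
  feasible : Feasible maxQ O
  potential_le : ∀ T ⊆ C', Feasible maxQ T → potential minT C T ≤ potential minT C O

lemma exists_isOptimal (maxQ minT : List (Pop α)) (C C' : Finset α) :
    ∃ O, IsOptimal maxQ minT C C' O := by
  obtain ⟨O, hO, hmax⟩ := exists_max_image {T ∈ C'.powerset | Feasible maxQ T}
    (potential minT C) ⟨∅, mem_filter.2 ⟨empty_mem_powerset _, fun q _ => by simp⟩⟩
  rw [mem_filter, mem_powerset] at hO
  exact ⟨O, hO.1, hO.2, fun T hT hTF => hmax T (mem_filter.2 ⟨mem_powerset.2 hT, hTF⟩)⟩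

variable {C C' O R : Finset α}

/-- Exchanging the next candidate against the optimum would give `insert (pick …) S` a
competitor that is at least as good, `S` itself or `insert y S` for another `y ∈ R`. -/
lemma pick_mem_of_isOptimal (hlam : Laminar (maxQ ++ minT)) (hC' : C' ⊆ C)
    (hO : IsOptimal maxQ minT C C' O) (hR : R.Nonempty) (hRC : R ⊆ C') (hSO : S ⊆ O)
    (hOSR : O ⊆ S ∪ R) (hSR : Disjoint S R) (hfeas : Feasible maxQ (insert (pick minT S hR) S)) :
    pick minT S hR ∈ O := by
  have hxR := pick_mem minT S hR
  set x := pick minT S hR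
  have hxS : x ∉ S := disjoint_right.1 hSR hxR
  by_contra hxO
  obtain ⟨S', T', -, hT'F, hT'sub, hV, hS'⟩ :=
    exists_potential_exchange hlam C hfeas hO.feasible (mem_insert_self x S) hxO
  have hT' := hO.potential_le T' (hT'sub.trans (insert_subset (hRC hxR) hO.subset)) hT'F
  have hS'lt : potential minT C S' < potential minT C (insert x S) := by
    rw [erase_insert hxS] at hS'
    rcases hS' with rfl | ⟨y, hyO, hyxS, rfl⟩
    · exact potential_lt_insert minT C hxS
    · have hyS : y ∉ S := fun h => hyxS (mem_insert_of_mem h)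
      have hyR : y ∈ R := (mem_union.1 (hOSR hyO)).resolve_left hyS
      exact potential_insert_lt_insert_pick hR (hRC.trans hC') hyR
        (fun h => hyxS (h ▸ mem_insert_self x S)) hyS hxS
  omega

lemma choice2Go_eq_of_isOptimal (hlam : Laminar (maxQ ++ minT)) (hC' : C' ⊆ C)
    (hO : IsOptimal maxQ minT C C' O) (hRC : R ⊆ C') (hSO : S ⊆ O) (hOSR : O ⊆ S ∪ R)
    (hSR : Disjoint S R) : choice2Go maxQ minT R S = O := by
  induction R using Finset.strongInduction generalizing S with
  | H R ih =>
  rw [choice2Go]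
  split_ifs with hR hfeas
  · have hxR := pick_mem minT S hR
    have hxO := pick_mem_of_isOptimal hlam hC' hO hR hRC hSO hOSR hSR hfeas
    refine ih _ (erase_ssubset hxR) ((erase_subset _ _).trans hRC) (insert_subset hxO hSO)
      (fun z hz => ?_)
      (disjoint_insert_left.2 ⟨notMem_erase _ _, hSR.mono_right (erase_subset _ _)⟩)
    have := hOSR hz
    by_cases hzx : z = pick minT S hR <;> simp_all
  · have hxR := pick_mem minT S hR
    have hxO : pick minT S hR ∉ O := fun h => hfeas (hO.feasible.mono (insert_subset h hSO))
    refine ih _ (erase_ssubset hxR) ((erase_subset _ _).trans hRC) hSO (fun z hz => ?_)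
      (hSR.mono_right (erase_subset _ _))
    have := hOSR hz
    have : z ≠ pick minT S hR := fun h => hxO (h ▸ hz)
    simp_all
  · rw [not_nonempty_iff_eq_empty] at hR
    subst hR
    exact hSO.antisymm (by simpa using hOSR)

lemma choice2_eq_of_isOptimal (hlam : Laminar (maxQ ++ minT)) (hC' : C' ⊆ C)
    (hO : IsOptimal maxQ minT C C' O) : choice2 maxQ minT C' = O :=
  choice2Go_eq_of_isOptimal hlam hC' hO subset_rfl (empty_subset _) (by simpa using hO.subset)
    (disjoint_empty_left _)

lemma IsOptimal.unique (hlam : Laminar (maxQ ++ minT)) (hC' : C' ⊆ C) {O' : Finset α}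
    (hO : IsOptimal maxQ minT C C' O) (hO' : IsOptimal maxQ minT C C' O') : O = O' :=
  (choice2_eq_of_isOptimal hlam hC' hO).symm.trans (choice2_eq_of_isOptimal hlam hC' hO')

end Potential

end PMA

theorem choice2_substitutable_general {α : Type*} [DecidableEq α] [LinearOrder α]
    (maxQ minT : List (Pop α))
    (hlam : Laminar (maxQ ++ minT))
    (C : Finset α) (c : α) :
    (choice2 maxQ minT C).erase c ⊆ choice2 maxQ minT (C.erase c) := by
  obtain ⟨O, hO⟩ := exists_isOptimal maxQ minT C C
  obtain ⟨O', hO'⟩ := exists_isOptimal maxQ minT C (C.erase c)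
  rw [choice2_eq_of_isOptimal hlam subset_rfl hO,
    choice2_eq_of_isOptimal hlam (erase_subset c C) hO']
  intro x hx
  obtain ⟨hxc, hxO⟩ := mem_erase.1 hx
  by_contra hxO'
  obtain ⟨S', T', hS'F, hT'F, hT'sub, hV, hS'⟩ :=
    exists_potential_exchange hlam C hO.feasible hO'.feasible hxO hxO'
  have hT' := hO'.potential_le T'
    (hT'sub.trans (insert_subset (mem_erase.2 ⟨hxc, hO.subset hxO⟩) hO'.subset)) hT'F
  obtain ⟨hxS', hS'C⟩ : x ∉ S' ∧ S' ⊆ C := by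
    rcases hS' with rfl | ⟨y, hyO', -, rfl⟩
    · exact ⟨notMem_erase x O, (erase_subset _ _).trans hO.subset⟩
    · exact ⟨by simp [(ne_of_mem_of_not_mem hyO' hxO').symm],
        insert_subset (mem_of_mem_erase (hO'.subset hyO')) ((erase_subset _ _).trans hO.subset)⟩
  have hS' : IsOptimal maxQ minT C C S' :=
    ⟨hS'C, hS'F, fun T hT hTF => (hO.potential_le T hT hTF).trans (by omega)⟩
  exact hxS' (hO.unique hlam subset_rfl hS' ▸ hxO)

/-- If the populations of a PMA are laminar and the populations with
positive minimum targets form a union of pairwise-disjoint chains, then the Algorithm 2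
choice function is substitutable: `Ch(C) \ {c} ⊆ Ch(C \ {c})` for every `c ∈ C`. -/
theorem choice2_substitutable {α : Type*} [DecidableEq α] [LinearOrder α]
    (maxQ minT : List (Pop α))
    (hlam : Laminar (maxQ ++ minT))
    (hchains : UnionOfDisjointChains (minTargetSets minT))
    (C : Finset α) (c : α) (hc : c ∈ C) :
    (choice2 maxQ minT C).erase c ⊆ choice2 maxQ minT (C.erase c) :=
  choice2_substitutable_general maxQ minT hlam C c
end
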